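/- arXiv:math/0510476 — 2 statements merged into one kernel-verified Lean document; each statement's English description precedes it below -/
import Mathlib

section
/- Let R be a commutative ring and g = Σ_{n≥1} aₙtⁿ ∈ R[[t]] a formal power series with zero constant term whose linear coefficient a₁ is a unit of R. Then for all Laurent series a, b ∈ R((t)): Res( (a∘g) · (b∘g)' ) = Res( a · b' ). (Invariance of the residue pairing Res(a db) under formal reparametrization; this is Proposition 1.3.7(b) expressed in coordinates: the transgressed forms τ(ω) are invariant under the action of K = Aut ℂ[[t]].) -/
/-- The formal derivative `a ↦ a'` on formal Laurent series:
the coefficient of `a'` at `n` is `(n+1) · a_{n+1}`. -/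
noncomputable def lderiv {R : Type*} [CommRing R] (a : LaurentSeries R) : LaurentSeries R where
  coeff n := (n + 1) • a.coeff (n + 1)
  isPWO_support' := by
    have hsub : (Function.support fun n : ℤ => (n + 1) • a.coeff (n + 1)) ⊆
        (fun n : ℤ => n - 1) '' a.support := by
      intro n hn
      refine ⟨n + 1, ?_, by ring⟩
      intro hz
      exact hn (by simp [Function.mem_support, hz])
    exact ((a.isPWO_support.image_of_monotoneOn
      (fun x _ y _ hxy => by simpa using hxy : MonotoneOn (fun n : ℤ => n - 1) a.support)).mono
      hsub)

/-- The residue of a formal Laurent series: the coefficient of `t⁻¹`. -/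
def res {R : Type*} [CommRing R] (a : LaurentSeries R) : R := a.coeff (-1)


/-!
Writing `Res(x·y')` as the finite sum `Σᵢ -i·xᵢ·y₋ᵢ` shows that it is bilinear and only
sees finitely many coefficients, so expanding `A = Σ aₙuⁿ` and `B = Σ bₘuᵐ` reduces the
theorem to `Res(uⁿ·(uᵐ)') = m·δ_{n+m,0}`. Since `(uᵐ)' = m·uᵐ⁻¹·u'`, this is
`Res(uᵏ·u') = δ_{k,-1}`. For `k ≠ -1`, `uᵏ·u'` is `±xʲ·x'` with `j ≥ 0` and `x = u` or
`x = u⁻¹`, and `(j+1)·xʲ·x'` is the derivative `(xʲ⁺¹)'`, whose residue vanishes; the factor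
`j+1` is removed by working with a universal Laurent series over the torsion-free ring
`ℤ[X₀, X₁, …]`. For `k = -1`, writing `u = t·w` gives `u⁻¹·u' = t⁻¹ + w⁻¹·w'`, of residue `1`.
-/

open HahnSeries
open scoped PowerSeries

section

variable {R : Type*} [CommRing R]

theorem lderiv_coeff (x : LaurentSeries R) (n : ℤ) :
    (lderiv x).coeff n = (n + 1) • x.coeff (n + 1) := rfl

theorem res_lderiv (x : LaurentSeries R) : res (lderiv x) = 0 := by
  simp [res, lderiv_coeff]

theorem coeff_single_one_mul_coe (k : ℤ) (f : R⟦X⟧) (m : ℤ) :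
    ((single k 1 : LaurentSeries R) * f).coeff m =
      if m - k < 0 then 0 else PowerSeries.coeff (m - k).natAbs f := by
  rw [coeff_single_mul, one_mul, PowerSeries.coeff_coe]

theorem single_one_mul_coe_mul_single_one_mul_coe (k l : ℤ) (f g : R⟦X⟧) :
    (single k 1 * (f : LaurentSeries R)) * (single l 1 * (g : LaurentSeries R)) =
      single (k + l) 1 * ((f * g : R⟦X⟧) : LaurentSeries R) := by
  rw [PowerSeries.coe_mul, ← one_mul (1 : R), ← single_mul_single, mul_one]
  ring

theorem lderiv_single_one_mul_coe (k : ℤ) (f : R⟦X⟧) :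
    lderiv (single k 1 * (f : LaurentSeries R)) =
      single (k - 1) 1 * ((k • f + PowerSeries.X * d⁄dX R f : R⟦X⟧) : LaurentSeries R) := by
  ext m
  rw [lderiv_coeff, coeff_single_one_mul_coe, coeff_single_one_mul_coe,
    show m - (k - 1) = m + 1 - k by ring]
  split_ifs with hm
  · rw [smul_zero]
  obtain ⟨n, hn⟩ : ∃ n : ℕ, m + 1 - k = n := ⟨(m + 1 - k).toNat, by omega⟩
  rw [hn, Int.natAbs_natCast, map_add, map_zsmul, zsmul_eq_mul, zsmul_eq_mul]
  rcases n with _ | n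
  · rw [PowerSeries.coeff_zero_X_mul, add_zero, show m + 1 = k by omega]
  · rw [PowerSeries.coeff_succ_X_mul, PowerSeries.coeff_derivative,
      show m + 1 = k + (n + 1) by omega]
    push_cast
    ring

theorem lderiv_mul (x y : LaurentSeries R) :
    lderiv (x * y) = x * lderiv y + lderiv x * y := by
  rw [← x.single_order_mul_powerSeriesPart, ← y.single_order_mul_powerSeriesPart]
  generalize x.order = k, x.powerSeriesPart = f, y.order = l, y.powerSeriesPart = g
  simp only [single_one_mul_coe_mul_single_one_mul_coe, lderiv_single_one_mul_coe]
  rw [show k + (l - 1) = k + l - 1 by ring, show k - 1 + l = k + l - 1 by ring, ← mul_add,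
    ← PowerSeries.coe_add, Derivation.leibniz]
  congr 2
  simp only [zsmul_eq_mul, smul_eq_mul, Int.cast_add]
  ring

theorem lderiv_add (x y : LaurentSeries R) : lderiv (x + y) = lderiv x + lderiv y := by
  ext n
  simp only [lderiv_coeff, coeff_add, smul_add]

theorem lderiv_smul (r : R) (x : LaurentSeries R) : lderiv (r • x) = r • lderiv x := by
  ext n
  rw [lderiv_coeff, HahnSeries.coeff_smul, HahnSeries.coeff_smul, lderiv_coeff, smul_comm]

theorem lderiv_one : lderiv (1 : LaurentSeries R) = 0 := by
  simpa using lderiv_mul (1 : LaurentSeries R) 1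

theorem lderiv_pow_succ (x : LaurentSeries R) (n : ℕ) :
    lderiv (x ^ (n + 1)) = (n + 1 : ℕ) • (x ^ n * lderiv x) := by
  induction n with
  | zero => simp
  | succ n ih =>
    rw [pow_succ, lderiv_mul, ih]
    simp only [nsmul_eq_mul]
    push_cast
    ring

theorem lderiv_units_zpow (u : (LaurentSeries R)ˣ) (n : ℤ) :
    lderiv (↑(u ^ n) : LaurentSeries R) =
      n • (↑(u ^ (n - 1)) * lderiv (u : LaurentSeries R)) := by
  have hstep (m : ℤ) : (↑(u ^ m) : LaurentSeries R) = ↑(u ^ (m - 1)) * ↑u := by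
    rw [← Units.val_mul, ← zpow_add_one, sub_add_cancel]
  induction n using Int.induction_on with
  | zero => simp [lderiv_one]
  | succ m ih =>
    rw [zpow_add_one, Units.val_mul, lderiv_mul, ih, add_sub_cancel_right, zsmul_eq_mul,
      zsmul_eq_mul, hstep m]
    push_cast
    ring
  | pred m ih =>
    have hinv : (↑u⁻¹ * ↑u : LaurentSeries R) = 1 := by
      rw [← Units.val_mul, inv_mul_cancel, Units.val_one]
    rw [hstep (-m), lderiv_mul, zsmul_eq_mul] at ih
    rw [zsmul_eq_mul]
    have e := hstep (-m - 1)
    set v : LaurentSeries R := ↑(u ^ (-(m : ℤ) - 1))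
    set v' : LaurentSeries R := ↑(u ^ (-(m : ℤ) - 1 - 1))
    set du := lderiv (u : LaurentSeries R)
    push_cast at ih ⊢
    linear_combination (↑u⁻¹ : LaurentSeries R) * ih - (lderiv v + (m + 1) * v' * du) * hinv
      - (m + 1) * ↑u⁻¹ * du * e

theorem res_add (x y : LaurentSeries R) : res (x + y) = res x + res y := coeff_add

theorem res_smul (r : R) (x : LaurentSeries R) : res (r • x) = r * res x := coeff_smul

theorem res_nsmul (n : ℕ) (x : LaurentSeries R) : res (n • x) = n • res x := by
  rw [res, res, coeff_nsmul, Pi.smul_apply]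

theorem res_zsmul (n : ℤ) (x : LaurentSeries R) : res (n • x) = n • res x := coeff_smul

noncomputable def resPairing : LaurentSeries R →ₗ[R] LaurentSeries R →ₗ[R] R :=
  LinearMap.mk₂ R (fun x y => res (x * lderiv y))
    (fun x₁ x₂ y => by rw [add_mul, res_add])
    (fun r x y => by rw [← C_mul_eq_smul, mul_assoc, C_mul_eq_smul, res_smul, smul_eq_mul])
    (fun x y₁ y₂ => by rw [lderiv_add, mul_add, res_add])
    (fun r x y => by
      rw [lderiv_smul, ← C_mul_eq_smul, mul_left_comm, C_mul_eq_smul, res_smul, smul_eq_mul])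

theorem resPairing_apply (x y : LaurentSeries R) : resPairing x y = res (x * lderiv y) := rfl

theorem res_sum_smul_mul_lderiv_sum_smul {ι κ : Type*} (s : Finset ι) (t : Finset κ)
    (a : ι → R) (b : κ → R) (x : ι → LaurentSeries R) (y : κ → LaurentSeries R) :
    res ((∑ i ∈ s, a i • x i) * lderiv (∑ j ∈ t, b j • y j)) =
      ∑ i ∈ s, ∑ j ∈ t, a i * b j * res (x i * lderiv (y j)) := by
  simp only [← resPairing_apply, map_sum, map_smul, LinearMap.sum_apply,
    LinearMap.smul_apply, smul_eq_mul, Finset.mul_sum]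
  rw [Finset.sum_comm]
  simp only [mul_left_comm, mul_assoc]

theorem res_mul_eq_sum_Icc {x y : LaurentSeries R} {p q : ℤ} (hx : ∀ i < p, x.coeff i = 0)
    (hy : ∀ i < q, y.coeff i = 0) :
    res (x * y) = ∑ i ∈ Finset.Icc p (-1 - q), x.coeff i * y.coeff (-1 - i) := by
  rw [res, coeff_mul]
  refine Finset.sum_bij_ne_zero (fun ij _ _ => ij.1) ?_ ?_ ?_ ?_
  · rintro ⟨i, j⟩ hij -
    obtain ⟨hi, hj, hij⟩ := Finset.mem_antidiagonal.mp hij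
    simp only [Finset.mem_Icc]
    constructor
    · by_contra h; exact hi (hx i (by omega))
    · by_contra h; exact hj (hy j (by omega))
  · rintro ⟨i, j⟩ h _ ⟨i', j'⟩ h' _ rfl
    obtain ⟨-, -, hij⟩ := Finset.mem_antidiagonal.mp h
    obtain ⟨-, -, hij'⟩ := Finset.mem_antidiagonal.mp h'
    simp only [Prod.mk.injEq, true_and]
    omega
  · intro i _ hne
    refine ⟨(i, -1 - i), Finset.mem_antidiagonal.mpr ⟨left_ne_zero_of_mul hne,
      right_ne_zero_of_mul hne, by ring⟩, hne, rfl⟩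
  · rintro ⟨i, j⟩ h _
    obtain ⟨-, -, hij⟩ := Finset.mem_antidiagonal.mp h
    rw [show j = -1 - i by omega]

theorem res_mul_lderiv_eq_sum_Icc {x y : LaurentSeries R} {p q : ℤ}
    (hx : ∀ i < p, x.coeff i = 0) (hy : ∀ i < q, y.coeff i = 0) :
    res (x * lderiv y) = ∑ i ∈ Finset.Icc p (-q), (-i) • (x.coeff i * y.coeff (-i)) := by
  have hy' : ∀ i < q - 1, (lderiv y).coeff i = 0 := fun i hi => by
    rw [lderiv_coeff, hy (i + 1) (by omega), smul_zero]
  rw [res_mul_eq_sum_Icc hx hy', show -1 - (q - 1) = -q by ring]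
  refine Finset.sum_congr rfl fun i _ => ?_
  rw [lderiv_coeff, show -1 - i + 1 = -i by ring, mul_smul_comm]

theorem res_pow_mul_lderiv_eq_zero_of_isAddTorsionFree [IsAddTorsionFree R]
    (x : LaurentSeries R) (n : ℕ) : res (x ^ n * lderiv x) = 0 := by
  have h : (n + 1) • res (x ^ n * lderiv x) = 0 := by
    rw [← res_nsmul, ← lderiv_pow_succ, res_lderiv]
  exact (nsmul_eq_zero_iff_right n.succ_ne_zero).mp h

section Map

variable {S : Type*} [CommRing S]

noncomputable def LaurentSeries.map (φ : R →+* S) : LaurentSeries R →+* LaurentSeries S where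
  toFun x := HahnSeries.map x φ
  map_one' := HahnSeries.map_one φ.toMonoidWithZeroHom
  map_mul' _ _ := HahnSeries.map_mul (φ : R →ₙ+* S)
  map_zero' := HahnSeries.map_zero (φ : ZeroHom R S)
  map_add' _ _ := HahnSeries.map_add (φ : R →+ S)

theorem LaurentSeries.coeff_map (φ : R →+* S) (x : LaurentSeries R) (n : ℤ) :
    (LaurentSeries.map φ x).coeff n = φ (x.coeff n) := rfl

theorem res_map (φ : R →+* S) (x : LaurentSeries R) :
    res (LaurentSeries.map φ x) = φ (res x) := rfl

theorem lderiv_map (φ : R →+* S) (x : LaurentSeries R) :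
    lderiv (LaurentSeries.map φ x) = LaurentSeries.map φ (lderiv x) := by
  ext n
  simp only [lderiv_coeff, LaurentSeries.coeff_map, map_zsmul]

theorem LaurentSeries.map_single_one_mul_coe (φ : R →+* S) (k : ℤ) (f : R⟦X⟧) :
    LaurentSeries.map φ (single k 1 * (f : LaurentSeries R)) =
      single k 1 * ((PowerSeries.map φ f : S⟦X⟧) : LaurentSeries S) := by
  ext n
  simp only [LaurentSeries.coeff_map, coeff_single_one_mul_coe]
  split_ifs <;> simp

end Map

theorem res_pow_mul_lderiv_eq_zero (x : LaurentSeries R) (n : ℕ) :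
    res (x ^ n * lderiv x) = 0 := by
  let φ : MvPolynomial ℕ ℤ →+* R :=
    MvPolynomial.eval₂Hom (Int.castRingHom R) fun i => PowerSeries.coeff i x.powerSeriesPart
  let ξ : LaurentSeries (MvPolynomial ℕ ℤ) :=
    single x.order 1 * ((PowerSeries.mk MvPolynomial.X : (MvPolynomial ℕ ℤ)⟦X⟧) :
      LaurentSeries (MvPolynomial ℕ ℤ))
  have hξ : LaurentSeries.map φ ξ = x := by
    conv_rhs => rw [← x.single_order_mul_powerSeriesPart]
    rw [LaurentSeries.map_single_one_mul_coe]
    congr 3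
    ext i
    simp [φ]
  rw [← hξ, lderiv_map, ← map_pow, ← map_mul, res_map,
    res_pow_mul_lderiv_eq_zero_of_isAddTorsionFree, map_zero]

/-- For `k ≤ -2`, `uᵏ·u' = -(u⁻¹)ʲ·(u⁻¹)'` with `j = -k - 2`. -/
theorem res_zpow_mul_lderiv_eq_zero (u : (LaurentSeries R)ˣ) {k : ℤ} (hk : k ≠ -1) :
    res ((↑(u ^ k) : LaurentSeries R) * lderiv (u : LaurentSeries R)) = 0 := by
  obtain ⟨n, rfl | rfl⟩ : ∃ n : ℕ, k = n ∨ k = -n - 2 :=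
    ⟨(if 0 ≤ k then k else -k - 2).toNat, by omega⟩
  · rw [zpow_natCast, Units.val_pow_eq_pow_val, res_pow_mul_lderiv_eq_zero]
  · have h := res_pow_mul_lderiv_eq_zero (↑(u ^ (-1 : ℤ)) : LaurentSeries R) n
    rwa [lderiv_units_zpow, ← Units.val_pow_eq_pow_val, mul_smul_comm, res_zsmul, ← mul_assoc,
      ← Units.val_mul, ← zpow_natCast, ← zpow_mul, ← zpow_add, neg_one_zsmul, neg_eq_zero,
      show (-1 : ℤ) * n + (-1 - 1) = -n - 2 by ring] at h

section Reparametrization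

variable {u : (LaurentSeries R)ˣ} {w : R⟦X⟧ˣ}

theorem val_inv_eq_single_one_mul_coe
    (hu : (u : LaurentSeries R) = single 1 1 * ((w : R⟦X⟧) : LaurentSeries R)) :
    ((u⁻¹ : (LaurentSeries R)ˣ) : LaurentSeries R) =
      single (-1) 1 * ((↑w⁻¹ : R⟦X⟧) : LaurentSeries R) := by
  refine Units.inv_eq_of_mul_eq_one_right ?_
  rw [hu, single_one_mul_coe_mul_single_one_mul_coe, Units.mul_inv, add_neg_cancel,
    PowerSeries.coe_one, mul_one, single_zero_one]

theorem exists_zpow_eq_single_one_mul_coe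
    (hu : (u : LaurentSeries R) = single 1 1 * ((w : R⟦X⟧) : LaurentSeries R)) (n : ℤ) :
    ∃ f : R⟦X⟧, (↑(u ^ n) : LaurentSeries R) = single n 1 * (f : LaurentSeries R) := by
  induction n using Int.induction_on with
  | zero => exact ⟨1, by simp⟩
  | succ n ih =>
    obtain ⟨f, hf⟩ := ih
    refine ⟨f * w, ?_⟩
    rw [zpow_add_one, Units.val_mul, hf, hu, single_one_mul_coe_mul_single_one_mul_coe]
  | pred n ih =>
    obtain ⟨f, hf⟩ := ih
    refine ⟨f * ↑w⁻¹, ?_⟩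
    rw [zpow_sub_one, Units.val_mul, hf, val_inv_eq_single_one_mul_coe hu,
      single_one_mul_coe_mul_single_one_mul_coe, sub_eq_add_neg]

theorem coeff_zpow_of_lt
    (hu : (u : LaurentSeries R) = single 1 1 * ((w : R⟦X⟧) : LaurentSeries R)) {n m : ℤ}
    (h : m < n) : (↑(u ^ n) : LaurentSeries R).coeff m = 0 := by
  obtain ⟨f, hf⟩ := exists_zpow_eq_single_one_mul_coe hu n
  rw [hf, coeff_single_one_mul_coe, if_pos (by omega)]

theorem res_inv_mul_lderiv
    (hu : (u : LaurentSeries R) = single 1 1 * ((w : R⟦X⟧) : LaurentSeries R)) :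
    res ((↑u⁻¹ : LaurentSeries R) * lderiv (u : LaurentSeries R)) = 1 := by
  rw [val_inv_eq_single_one_mul_coe hu, hu, lderiv_single_one_mul_coe, sub_self,
    single_one_mul_coe_mul_single_one_mul_coe, res, coeff_single_one_mul_coe]
  simp [mul_add]

theorem res_zpow_mul_lderiv_zpow
    (hu : (u : LaurentSeries R) = single 1 1 * ((w : R⟦X⟧) : LaurentSeries R)) (n m : ℤ) :
    res ((↑(u ^ n) : LaurentSeries R) * lderiv (↑(u ^ m) : LaurentSeries R)) =
      if n + m = 0 then (m : R) else 0 := by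
  rw [lderiv_units_zpow, mul_smul_comm, res_zsmul, ← mul_assoc, ← Units.val_mul, ← zpow_add]
  split_ifs with h
  · rw [show n + (m - 1) = -1 by omega, zpow_neg_one, res_inv_mul_lderiv hu, zsmul_one]
  · rw [res_zpow_mul_lderiv_eq_zero u (by omega), smul_zero]

end Reparametrization

/-- `C = Σₙ cₙ • P n`, the sum converging coefficientwise; for `P n = gⁿ`, `C = c ∘ g`. -/
def IsSubstLimit (P : ℤ → LaurentSeries R) (c C : LaurentSeries R) : Prop :=
  ∀ m : ℤ, ∃ N : ℤ, ∀ M : ℤ, N ≤ M →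
    (∑ n ∈ Finset.Icc c.order M, c.coeff n • P n).coeff m = C.coeff m

namespace IsSubstLimit

variable {P : ℤ → LaurentSeries R} {c C : LaurentSeries R}

theorem coeff_partialSum_of_lt_order (hP : ∀ n m, m < n → (P n).coeff m = 0) (M : ℤ) :
    ∀ m < c.order, (∑ n ∈ Finset.Icc c.order M, c.coeff n • P n).coeff m = 0 := by
  intro m hm
  rw [coeff_sum]
  refine Finset.sum_eq_zero fun n hn => ?_
  rw [Finset.mem_Icc] at hn
  rw [coeff_smul, hP n m (by omega), smul_zero]

theorem coeff_partialSum (hP : ∀ n m, m < n → (P n).coeff m = 0) (hC : IsSubstLimit P c C)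
    {m M : ℤ} (hm : m ≤ M) :
    (∑ n ∈ Finset.Icc c.order M, c.coeff n • P n).coeff m = C.coeff m := by
  obtain ⟨N, hN⟩ := hC m
  rw [← hN (max M N) (le_max_right M N), coeff_sum, coeff_sum]
  refine Finset.sum_subset (Finset.Icc_subset_Icc_right (le_max_left M N)) fun n hn hnM => ?_
  rw [Finset.mem_Icc] at hn hnM
  rw [coeff_smul, hP n m (by omega), smul_zero]

theorem coeff_of_lt_order (hP : ∀ n m, m < n → (P n).coeff m = 0) (hC : IsSubstLimit P c C) :
    ∀ m < c.order, C.coeff m = 0 := fun m hm => by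
  rw [← coeff_partialSum hP hC le_rfl, coeff_partialSum_of_lt_order hP m m hm]

theorem res_mul_lderiv (hP : ∀ n m, m < n → (P n).coeff m = 0)
    (hPres : ∀ n m, res (P n * lderiv (P m)) = if n + m = 0 then (m : R) else 0)
    {d D : LaurentSeries R} (hC : IsSubstLimit P c C) (hD : IsSubstLimit P d D) :
    res (C * lderiv D) =
      ∑ i ∈ Finset.Icc c.order (-d.order), (-i) • (c.coeff i * d.coeff (-i)) := by
  set M := max (-c.order) (-d.order)
  calc res (C * lderiv D)
      = res ((∑ n ∈ Finset.Icc c.order M, c.coeff n • P n) *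
          lderiv (∑ m ∈ Finset.Icc d.order M, d.coeff m • P m)) := by
        rw [res_mul_lderiv_eq_sum_Icc (coeff_of_lt_order hP hC) (coeff_of_lt_order hP hD),
          res_mul_lderiv_eq_sum_Icc (coeff_partialSum_of_lt_order hP M)
            (coeff_partialSum_of_lt_order hP M)]
        refine Finset.sum_congr rfl fun i hi => ?_
        rw [Finset.mem_Icc] at hi
        rw [coeff_partialSum hP hC (by omega), coeff_partialSum hP hD (by omega)]
    _ = ∑ n ∈ Finset.Icc c.order M, ∑ m ∈ Finset.Icc d.order M,
          c.coeff n * d.coeff m * res (P n * lderiv (P m)) :=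
        res_sum_smul_mul_lderiv_sum_smul ..
    _ = ∑ n ∈ Finset.Icc c.order M,
          if -n ∈ Finset.Icc d.order M then c.coeff n * d.coeff (-n) * (-n : ℤ) else 0 := by
        refine Finset.sum_congr rfl fun n _ => ?_
        simp_rw [hPres, add_eq_zero_iff_eq_neg', mul_ite, mul_zero]
        rw [Finset.sum_ite_eq']
    _ = ∑ i ∈ Finset.Icc c.order (-d.order), (-i) • (c.coeff i * d.coeff (-i)) := by
        rw [← Finset.sum_filter]
        refine Finset.sum_congr ?_ fun i _ => by rw [zsmul_eq_mul, mul_comm]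
        ext i
        simp only [Finset.mem_filter, Finset.mem_Icc]
        omega

end IsSubstLimit

theorem PowerSeries.exists_eq_X_mul_unit {g : R⟦X⟧} (h0 : PowerSeries.constantCoeff g = 0)
    (h1 : IsUnit (PowerSeries.coeff 1 g)) : ∃ w : R⟦X⟧ˣ, g = PowerSeries.X * (w : R⟦X⟧) := by
  obtain ⟨w, rfl⟩ := PowerSeries.X_dvd_iff.mpr h0
  rw [PowerSeries.coeff_succ_X_mul, PowerSeries.coeff_zero_eq_constantCoeff_apply] at h1
  exact ⟨(PowerSeries.isUnit_iff_constantCoeff.mpr h1).unit, rfl⟩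

end

/-- Invariance of the residue pairing `Res(a db)` under formal reparametrization
(Proposition 1.3.7(b) in coordinates): let `g = Σ_{n≥1} aₙtⁿ ∈ R[[t]]` have zero constant
term and unit linear coefficient, so that `g` is a unit `u` of `R((t))` and for any Laurent
series `h` the substitution `h∘g := Σₙ hₙ·gⁿ` is the (unique) `t`-adic limit of the partial
sums `Σ_{n₀ ≤ n ≤ M} hₙ·gⁿ`. If `A = a∘g` and `B = b∘g`, then
`Res((a∘g)·(b∘g)') = Res(a·b')`. -/
theorem res_pairing_invariant_under_substitution (R : Type*) [CommRing R] (g : PowerSeries R)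
    (h0 : PowerSeries.constantCoeff g = 0) (h1 : IsUnit (PowerSeries.coeff 1 g))
    (u : (LaurentSeries R)ˣ) (hu : (u : LaurentSeries R) = (g : LaurentSeries R))
    (a b A B : LaurentSeries R)
    (hA : ∀ m : ℤ, ∃ N : ℤ, ∀ M : ℤ, N ≤ M →
      (∑ n ∈ Finset.Icc a.order M,
        a.coeff n • ((u ^ n : (LaurentSeries R)ˣ) : LaurentSeries R)).coeff m = A.coeff m)
    (hB : ∀ m : ℤ, ∃ N : ℤ, ∀ M : ℤ, N ≤ M →
      (∑ n ∈ Finset.Icc b.order M,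
        b.coeff n • ((u ^ n : (LaurentSeries R)ˣ) : LaurentSeries R)).coeff m = B.coeff m) :
    res (A * lderiv B) = res (a * lderiv b) := by
  obtain ⟨w, rfl⟩ := PowerSeries.exists_eq_X_mul_unit h0 h1
  have hw : (u : LaurentSeries R) = single 1 1 * ((w : R⟦X⟧) : LaurentSeries R) := by
    rw [hu, PowerSeries.coe_mul, PowerSeries.coe_X]
  rw [IsSubstLimit.res_mul_lderiv (fun _ _ => coeff_zpow_of_lt hw)
      (res_zpow_mul_lderiv_zpow hw) hA hB,
    res_mul_lderiv_eq_sum_Icc (fun _ => coeff_eq_zero_of_lt_order)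
      (fun _ => coeff_eq_zero_of_lt_order)]
end

section
/- Let K be a field of characteristic zero and σ any type. Let D be the K-linear derivation of the polynomial ring K[x_{s,n} : s ∈ σ, n ∈ ℕ] (polynomials in the variables x_{s,n} indexed by σ × ℕ) determined by D(x_{s,n}) = x_{s,n+1} for all s, n. Then the kernel of D consists exactly of the constants: if D(p) = 0 then p ∈ K. (This is the fact, used in the proof of Lemma 1.5.4, that the ring of constants of the canonical derivation ∂ of the differential envelope A_𝒟 of a polynomial algebra A — equivalently, of the coordinate ring of the scheme of formal arcs in affine space, with ∂ corresponding to the action of d/dt — is equal to the ground field.) -/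
open MvPolynomial

/-- In characteristic zero, a variable occurring in a polynomial has nonzero partial
derivative. -/
lemma pderiv_ne_zero_of_mem_vars' {K : Type*} [CommRing K] [NoZeroDivisors K] [CharZero K] {σ : Type*}
    {p : MvPolynomial σ K} {v : σ} (hv : v ∈ p.vars) :
    MvPolynomial.pderiv v p ≠ 0 := by
  classical
  obtain ⟨d, hd, hdv⟩ := (mem_vars v).1 hv
  rw [Finsupp.mem_support_iff] at hdv
  intro h
  have hc : coeff (d - Finsupp.single v 1) (pderiv v p) = coeff d p * (d v : K) := by
    conv_lhs => rw [p.as_sum, map_sum]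
    rw [coeff_sum, Finset.sum_eq_single d]
    · rw [pderiv_monomial, coeff_monomial, if_pos rfl]
    · intro b hb hbd
      rw [pderiv_monomial, coeff_monomial]
      split_ifs with hb'
      · by_cases hbv : b v = 0
        · simp [hbv]
        · exfalso
          apply hbd
          have h1 : Finsupp.single v 1 ≤ b := by rw [Finsupp.single_le_iff]; omega
          have h2 : Finsupp.single v 1 ≤ d := by rw [Finsupp.single_le_iff]; omega
          calc b = b - Finsupp.single v 1 + Finsupp.single v 1 :=
                (tsub_add_cancel_of_le h1).symm
            _ = d - Finsupp.single v 1 + Finsupp.single v 1 := by rw [hb']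
            _ = d := tsub_add_cancel_of_le h2
      · rfl
    · intro hds; exact absurd hd hds
  rw [h, coeff_zero] at hc
  exact mul_ne_zero (mem_support_iff.1 hd) (Nat.cast_ne_zero.mpr hdv) hc.symm

/-- A polynomial with no variables is a constant. -/
lemma eq_C_of_vars_empty' {K : Type*} [CommSemiring K] {σ : Type*}
    {p : MvPolynomial σ K} (h : p.vars = ∅) : ∃ c : K, p = MvPolynomial.C c := by
  have hp : p ∈ supported K (∅ : Set σ) := by
    rw [mem_supported, h]; simp
  rw [supported_empty] at hp
  obtain ⟨c, hc⟩ := Algebra.mem_bot.1 hp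
  exact ⟨c, hc.symm⟩

/-- The fact used in the proof of Lemma 1.5.4: over a field `K` of characteristic zero,
the ring of constants of the canonical derivation `D` of the differential envelope of a
polynomial algebra (equivalently, of the coordinate ring `K[x_{s,n} : s ∈ σ, n ∈ ℕ]` of the
scheme of formal arcs in affine space, with `D(x_{s,n}) = x_{s,n+1}` corresponding to the
action of `d/dt`) consists exactly of the constants: if `D(p) = 0` then `p ∈ K`. -/
theorem constants_of_arc_derivation (K : Type*) [Field K] [CharZero K] (σ : Type*)
    (D : Derivation K (MvPolynomial (σ × ℕ) K) (MvPolynomial (σ × ℕ) K))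
    (hD : ∀ (s : σ) (n : ℕ), D (MvPolynomial.X (s, n)) = MvPolynomial.X (s, n + 1))
    (p : MvPolynomial (σ × ℕ) K) (hp : D p = 0) :
    ∃ c : K, p = MvPolynomial.C c := by
  classical
  suffices h : ∀ n : ℕ, ∀ q : MvPolynomial (σ × ℕ) K, D q = 0 →
      (∀ v ∈ q.vars, v.2 < n) → ∃ c : K, q = MvPolynomial.C c by
    exact h (p.vars.sup Prod.snd + 1) p hp fun v hv =>
      Nat.lt_succ_of_le (Finset.le_sup (f := Prod.snd) hv)
  intro n
  induction n with
  | zero =>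
    intro q hq hbound
    apply eq_C_of_vars_empty'
    exact Finset.eq_empty_of_forall_notMem fun v hv => Nat.not_lt_zero _ (hbound v hv)
  | succ n ih =>
    intro q hq hbound
    have key : ∀ s : σ, pderiv ((s, n) : σ × ℕ) q = 0 := by
      intro s
      have hnot : ((s, n + 1) : σ × ℕ) ∉ q.vars := fun h => by
        simpa using hbound _ h
      have hE : (⁅pderiv (R := K) ((s, n + 1) : σ × ℕ), D⁆ :
          Derivation K (MvPolynomial (σ × ℕ) K) (MvPolynomial (σ × ℕ) K)) =
          pderiv ((s, n) : σ × ℕ) := by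
        apply derivation_ext
        rintro ⟨t, m⟩
        rw [Derivation.commutator_apply, hD]
        by_cases h1 : ((t, m) : σ × ℕ) = (s, n)
        · rw [Prod.mk.injEq] at h1
          obtain ⟨rfl, rfl⟩ := h1
          rw [pderiv_X_self, pderiv_X_of_ne (show ((t, m) : σ × ℕ) ≠ (t, m + 1) by simp),
            map_zero, sub_zero, pderiv_X_self]
        · have hne : ((t, m + 1) : σ × ℕ) ≠ (s, n + 1) := by
            simp only [ne_eq, Prod.mk.injEq, not_and] at h1 ⊢
            intro ht hm; exact h1 ht (by omega)
          rw [pderiv_X_of_ne hne, pderiv_X_of_ne (show ((t, m) : σ × ℕ) ≠ (s, n) from h1),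
            zero_sub, neg_eq_zero]
          by_cases h2 : ((t, m) : σ × ℕ) = (s, n + 1)
          · rw [h2, pderiv_X_self]; exact D.map_one_eq_zero
          · rw [pderiv_X_of_ne h2, map_zero]
      calc pderiv ((s, n) : σ × ℕ) q
          = (⁅pderiv (R := K) ((s, n + 1) : σ × ℕ), D⁆ :
              Derivation K (MvPolynomial (σ × ℕ) K) (MvPolynomial (σ × ℕ) K)) q := by rw [hE]
        _ = pderiv ((s, n + 1) : σ × ℕ) (D q) - D (pderiv ((s, n + 1) : σ × ℕ) q) :=
            Derivation.commutator_apply _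
        _ = 0 := by
            rw [hq, pderiv_eq_zero_of_notMem_vars hnot]; simp
    apply ih q hq
    intro v hv
    have h1 := hbound v hv
    rcases Nat.lt_succ_iff_lt_or_eq.1 h1 with h | h
    · exact h
    · exfalso
      have hv' : ((v.1, n) : σ × ℕ) ∈ q.vars := by rwa [← h]
      exact pderiv_ne_zero_of_mem_vars' hv' (key v.1)
end
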